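/- arXiv:2301.13088 — 4 statements merged into one kernel-verified Lean document; each statement's English description precedes it below -/
import Mathlib

section
/- Let K be a compact subgroup of GL(d,ℝ) (with the subspace topology from the d×d real matrices). Then there exists a symmetric positive-definite d×d real matrix P such that Aᵀ P A = P for every A ∈ K. Equivalently, every compact subgroup of GL(d,ℝ) preserves some inner product on ℝ^d. -/
/-!
Averaging `Aᵀ A` over a compact group against a right-invariant Haar measure (the inverse of a
left Haar measure) gives a matrix `P` with `Aᵀ P A = P` on the group. It is positive definite
because `xᵀ P x` is the integral of `|A x|²`, a continuous nonnegative function that is positive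
at the identity, and Haar measure charges nonempty open sets. A compact `K ⊆ GL(d, ℝ)` is also
compact inside the topological group of units of the matrix ring, because inversion is
continuous on invertible matrices.
-/

open Matrix MeasureTheory Topology

theorem Matrix.isEmbedding_unitsVal {n K : Type*} [Fintype n] [DecidableEq n] [Field K]
    [TopologicalSpace K] [IsTopologicalDivisionRing K] :
    IsEmbedding (Units.val : (Matrix n n K)ˣ → Matrix n n K) := by
  refine Units.isEmbedding_val_mk' (f := Inv.inv) (fun A hA => ?_) fun u => (coe_units_inv u).symm
  refine (continuousAt_matrix_inv A ?_).continuousWithinAt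
  rw [Ring.inverse_eq_inv']
  exact continuousAt_inv₀ ((isUnit_iff_isUnit_det A).mp hA).ne_zero

theorem Matrix.dotProduct_transpose_mul_mul_mulVec {m n R : Type*} [Fintype m] [Fintype n]
    [CommSemiring R] (A : Matrix m n R) (P : Matrix m m R) (x y : n → R) :
    x ⬝ᵥ (Aᵀ * P * A) *ᵥ y = (A *ᵥ x) ⬝ᵥ P *ᵥ (A *ᵥ y) := by
  rw [← mulVec_mulVec, ← mulVec_mulVec, dotProduct_mulVec, vecMul_transpose]

section MatrixIntegral

variable {X : Type*} [MeasurableSpace X] {m n : Type*}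

/-- Taken entrywise, since `Matrix` carries no global normed-space instance. -/
noncomputable def matrixIntegral (μ : Measure X) (f : X → Matrix m n ℝ) : Matrix m n ℝ :=
  of fun i j => ∫ x, f x i j ∂μ

theorem transpose_matrixIntegral (μ : Measure X) (f : X → Matrix m n ℝ) :
    (matrixIntegral μ f)ᵀ = matrixIntegral μ fun x => (f x)ᵀ :=
  rfl

variable [Fintype m] [Fintype n] [TopologicalSpace X] [CompactSpace X] [OpensMeasurableSpace X]
  {μ : Measure X} [IsFiniteMeasureOnCompacts μ] {f : X → Matrix m n ℝ}

theorem linearMap_matrixIntegral {F : Type*} [NormedAddCommGroup F] [NormedSpace ℝ F]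
    [CompleteSpace F] (L : Matrix m n ℝ →ₗ[ℝ] F) (hf : Continuous f) :
    L (matrixIntegral μ f) = ∫ x, L (f x) ∂μ := by
  let L' : (m → n → ℝ) →L[ℝ] F :=
    LinearMap.toContinuousLinearMap (L ∘ₗ (ofLinearEquiv ℝ).toLinearMap)
  have hint : Integrable (fun x => of.symm (f x)) μ :=
    hf.integrable_of_hasCompactSupport (.of_compactSpace _)
  have hentry : matrixIntegral μ f = of (∫ x, of.symm (f x) ∂μ) := by
    ext i j
    rw [of_apply, eval_integral hint.eval, eval_integral (hint.eval i).eval]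
    rfl
  rw [hentry]
  exact (L'.integral_comp_comm hint).symm

theorem mul_matrixIntegral_mul {l p : Type*} [Fintype l] [Fintype p] (A : Matrix l m ℝ)
    (B : Matrix n p ℝ) (hf : Continuous f) :
    A * matrixIntegral μ f * B = matrixIntegral μ fun x => A * f x * B := by
  ext i j
  exact linearMap_matrixIntegral (μ := μ)
    { toFun := fun M => (A * M * B) i j
      map_add' := by simp [Matrix.mul_add, Matrix.add_mul]
      map_smul' := by simp } hf

theorem dotProduct_matrixIntegral_mulVec (hf : Continuous f) (v : m → ℝ) (w : n → ℝ) :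
    v ⬝ᵥ matrixIntegral μ f *ᵥ w = ∫ x, v ⬝ᵥ f x *ᵥ w ∂μ :=
  linearMap_matrixIntegral
    { toFun := fun M => v ⬝ᵥ M *ᵥ w
      map_add' := by simp [add_mulVec]
      map_smul' := by simp [smul_mulVec] } hf

theorem posDef_matrixIntegral_transpose_mul_self [μ.IsOpenPosMeasure] (hf : Continuous f)
    {x₀ : X} (hx₀ : Function.Injective (f x₀).mulVec) :
    (matrixIntegral μ fun x => (f x)ᵀ * f x).PosDef := by
  have hsymm : (matrixIntegral μ fun x => (f x)ᵀ * f x).IsHermitian := by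
    simp [IsHermitian, conjTranspose_eq_transpose_of_trivial, transpose_matrixIntegral,
      transpose_mul]
  refine posDef_iff_dotProduct_mulVec.mpr ⟨hsymm, fun v hv => ?_⟩
  rw [star_trivial, dotProduct_matrixIntegral_mulVec (by fun_prop)]
  have hquad (x : X) : v ⬝ᵥ ((f x)ᵀ * f x) *ᵥ v = (f x *ᵥ v) ⬝ᵥ (f x *ᵥ v) := by
    rw [← mulVec_mulVec, dotProduct_mulVec, vecMul_transpose]
  simp_rw [hquad]
  refine (by fun_prop : Continuous fun x => f x *ᵥ v ⬝ᵥ f x *ᵥ v)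
    |>.integral_pos_of_hasCompactSupport_nonneg_nonzero (μ := μ) (x := x₀)
      (.of_compactSpace _)
      (fun x => by simpa using dotProduct_self_star_nonneg (f x *ᵥ v)) ?_
  rw [Ne, dotProduct_self_eq_zero, ← mulVec_zero (f x₀)]
  exact hx₀.ne hv

end MatrixIntegral

theorem matrixIntegral_mul_right_eq_self {G : Type*} [Group G] [MeasurableSpace G]
    [MeasurableMul G] (μ : Measure G) [μ.IsMulRightInvariant] {m n : Type*}
    (f : G → Matrix m n ℝ) (g : G) :
    (matrixIntegral μ fun h => f (h * g)) = matrixIntegral μ f := by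
  ext i j
  exact integral_mul_right_eq_self (fun h => f h i j) g

section Representation

variable {G : Type*} [Group G] [TopologicalSpace G] [IsTopologicalGroup G] [CompactSpace G]
  {n : Type*} [Fintype n] [DecidableEq n] (ρ : G →* Matrix n n ℝ)

theorem transpose_mul_matrixIntegral_transpose_mul_self_mul [MeasurableSpace G] [BorelSpace G]
    (hρ : Continuous ρ) (μ : Measure G) [μ.IsMulRightInvariant] [IsFiniteMeasureOnCompacts μ]
    (g : G) :
    (ρ g)ᵀ * (matrixIntegral μ fun h => (ρ h)ᵀ * ρ h) * ρ g =
      matrixIntegral μ fun h => (ρ h)ᵀ * ρ h := by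
  rw [mul_matrixIntegral_mul _ _ (by fun_prop)]
  calc (matrixIntegral μ fun h => (ρ g)ᵀ * ((ρ h)ᵀ * ρ h) * ρ g)
      = matrixIntegral μ fun h => (ρ (h * g))ᵀ * ρ (h * g) := by
        simp only [map_mul, transpose_mul, Matrix.mul_assoc]
    _ = matrixIntegral μ fun h => (ρ h)ᵀ * ρ h :=
        matrixIntegral_mul_right_eq_self μ (fun h => (ρ h)ᵀ * ρ h) g

theorem exists_posDef_transpose_mul_mul_eq (hρ : Continuous ρ) :
    ∃ P : Matrix n n ℝ, P.PosDef ∧ ∀ g, (ρ g)ᵀ * P * ρ g = P := by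
  borelize G
  let μ : Measure G := Measure.haar.inv
  exact ⟨_, posDef_matrixIntegral_transpose_mul_self (μ := μ) hρ (x₀ := 1)
      fun v w h => by simpa using h,
    transpose_mul_matrixIntegral_transpose_mul_self_mul ρ hρ μ⟩

end Representation

theorem compact_subgroup_preserves_inner_product (d : ℕ)
    (K : Set (Matrix (Fin d) (Fin d) ℝ))
    (hK_unit : ∀ A ∈ K, IsUnit A)
    (hK_one : (1 : Matrix (Fin d) (Fin d) ℝ) ∈ K)
    (hK_mul : ∀ A ∈ K, ∀ B ∈ K, A * B ∈ K)
    (hK_inv : ∀ A ∈ K, A⁻¹ ∈ K)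
    (hK_compact : IsCompact K) :
    ∃ P : Matrix (Fin d) (Fin d) ℝ, P.PosDef ∧
      (∀ A ∈ K, Aᵀ * P * A = P) ∧
      (∀ A ∈ K, ∀ x y : Fin d → ℝ,
        (A.mulVec x) ⬝ᵥ P.mulVec (A.mulVec y) = x ⬝ᵥ P.mulVec y) := by
  let G : Subgroup (Matrix (Fin d) (Fin d) ℝ)ˣ :=
    { carrier := Units.val ⁻¹' K
      one_mem' := hK_one
      mul_mem' := fun ha hb => hK_mul _ ha _ hb
      inv_mem' := fun {u} hu => by simpa [coe_units_inv] using hK_inv _ hu }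
  have hG : IsCompact (G : Set (Matrix (Fin d) (Fin d) ℝ)ˣ) :=
    isEmbedding_unitsVal.isInducing.isCompact_preimage' hK_compact hK_unit
  have : CompactSpace G := isCompact_iff_compactSpace.mp hG
  obtain ⟨P, hP, hPG⟩ := exists_posDef_transpose_mul_mul_eq ((Units.coeHom _).comp G.subtype)
    (Units.continuous_val.comp continuous_subtype_val)
  have hPK : ∀ A ∈ K, Aᵀ * P * A = P := fun A hA =>
    hPG ⟨(hK_unit A hA).unit, by simpa [G] using hA⟩
  refine ⟨P, hP, hPK, fun A hA x y => ?_⟩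
  rw [← dotProduct_transpose_mul_mul_mulVec, hPK A hA]
end

section
/- Let K be a compact subgroup of SL(d,ℝ) containing SO(d). Then K = SO(d). In particular, SO(d) is a maximal compact subgroup of SL(d,ℝ). -/
/-!
Write `M ∈ K` in polar form `M = O * S` with `O ∈ SO(d)` and `S = √(Mᵀ M)` positive semidefinite
of determinant `1`. Then `S = Oᵀ * M ∈ K`, so all powers of `S` lie in the compact set `K` and
their traces `∑ λᵢ ^ k` stay bounded. Hence every eigenvalue `λᵢ` of `S` is at most `1`; as their
product is `det S = 1`, all of them equal `1`, so `S = 1` and `M = O ∈ SO(d)`.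
-/

open Matrix

open scoped NNReal MatrixOrder ComplexOrder

theorem Real.eq_one_of_prod_eq_one_of_le_one {ι : Type*} [Fintype ι] {f : ι → ℝ}
    (h0 : ∀ i, 0 ≤ f i) (h1 : ∀ i, f i ≤ 1) (hprod : ∏ i, f i = 1) (i : ι) : f i = 1 := by
  lift f to ι → ℝ≥0 using h0
  have h1 : ∀ i, f i ≤ 1 := fun i ↦ by exact_mod_cast h1 i
  have hprod : ∏ i, f i = 1 := by simp only at hprod; exact_mod_cast hprod
  rw [NNReal.coe_eq_one]
  exact (Finset.prod_eq_one_iff_of_le_one' fun j _ ↦ h1 j).mp hprod i (Finset.mem_univ i)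

namespace Matrix

variable {n 𝕜 : Type*} [Fintype n] [DecidableEq n] [RCLike 𝕜] {A : Matrix n n 𝕜}

theorem IsHermitian.trace_pow_eq_sum_eigenvalues_pow (hA : A.IsHermitian) (k : ℕ) :
    (A ^ k).trace = ∑ i, ((hA.eigenvalues i ^ k : ℝ) : 𝕜) := by
  conv_lhs => rw [hA.spectral_theorem]
  rw [← map_pow, Unitary.conjStarAlgAut_apply, trace_mul_cycle,
    Unitary.star_mul_self_of_mem hA.eigenvectorUnitary.2, one_mul, diagonal_pow, trace_diagonal]
  simp

theorem IsHermitian.eq_one_of_eigenvalues_eq_one (hA : A.IsHermitian)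
    (h : ∀ i, hA.eigenvalues i = 1) : A = 1 := by
  rw [hA.spectral_theorem, show RCLike.ofReal ∘ hA.eigenvalues = fun _ ↦ (1 : 𝕜) by
    ext i; simp [h i], diagonal_one, map_one]

theorem PosSemidef.eigenvalues_le_one_of_bddAbove_trace_pow (hA : A.PosSemidef)
    (hbdd : BddAbove (Set.range fun k : ℕ ↦ RCLike.re (A ^ k).trace)) (i : n) :
    hA.1.eigenvalues i ≤ 1 := by
  obtain ⟨C, hC⟩ := hbdd
  by_contra! hi
  obtain ⟨k, hk⟩ := pow_unbounded_of_one_lt C hi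
  have : hA.1.eigenvalues i ^ k ≤ RCLike.re (A ^ k).trace := by
    rw [hA.1.trace_pow_eq_sum_eigenvalues_pow, map_sum]
    simp only [RCLike.ofReal_re]
    exact Finset.single_le_sum (fun j _ ↦ pow_nonneg (hA.eigenvalues_nonneg j) k)
      (Finset.mem_univ i)
  exact (hk.trans_le this).not_ge (hC ⟨k, rfl⟩)

theorem PosSemidef.eq_one_of_bddAbove_trace_pow_of_det_eq_one (hA : A.PosSemidef)
    (hbdd : BddAbove (Set.range fun k : ℕ ↦ RCLike.re (A ^ k).trace)) (hdet : A.det = 1) :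
    A = 1 := by
  refine hA.1.eq_one_of_eigenvalues_eq_one <| Real.eq_one_of_prod_eq_one_of_le_one
    hA.eigenvalues_nonneg (hA.eigenvalues_le_one_of_bddAbove_trace_pow hbdd) ?_
  exact_mod_cast hA.1.det_eq_prod_eigenvalues.symm.trans hdet

theorem exists_eq_orthogonal_mul_posSemidef_of_det_eq_one {M : Matrix n n ℝ} (hM : M.det = 1) :
    ∃ O S : Matrix n n ℝ, O * Oᵀ = 1 ∧ O.det = 1 ∧ S.PosSemidef ∧ S.det = 1 ∧ M = O * S := by
  have hMM : (Mᵀ * M).PosSemidef := by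
    simpa using posSemidef_conjTranspose_mul_self M
  set S := CFC.sqrt (Mᵀ * M)
  have hS : S.PosSemidef := (CFC.sqrt_nonneg _).posSemidef
  have hST : Sᵀ = S := by simpa using hS.1.eq
  have hSS : S * S = Mᵀ * M := CFC.sqrt_mul_sqrt_self _ hMM.nonneg
  have hSdet : S.det = 1 := by
    rw [hMM.det_sqrt, det_mul, det_transpose, hM]
    simp
  have hSunit : IsUnit S.det := hSdet ▸ isUnit_one
  refine ⟨M * S⁻¹, S, ?_, ?_, hS, hSdet, (nonsing_inv_mul_cancel_right _ _ hSunit).symm⟩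
  · rw [mul_eq_one_comm]
    calc (M * S⁻¹)ᵀ * (M * S⁻¹) = S⁻¹ * (S * S) * S⁻¹ := by
          rw [transpose_mul, transpose_nonsing_inv, hST, hSS]; simp only [mul_assoc]
      _ = 1 := by
          rw [← mul_assoc, nonsing_inv_mul _ hSunit, one_mul, mul_nonsing_inv _ hSunit]
  · rw [det_mul, hM, det_nonsing_inv, hSdet, Ring.inverse_one, one_mul]

end Matrix

theorem so_maximal_compact_in_sl_general (d : ℕ)
    (K : Set (Matrix (Fin d) (Fin d) ℝ))
    (hK_SL : ∀ M ∈ K, M.det = 1)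
    (hK_mul : ∀ M ∈ K, ∀ N ∈ K, M * N ∈ K)
    (hK_compact : IsCompact K)
    (hSO : {M : Matrix (Fin d) (Fin d) ℝ | M * Mᵀ = 1 ∧ M.det = 1} ⊆ K) :
    K = {M : Matrix (Fin d) (Fin d) ℝ | M * Mᵀ = 1 ∧ M.det = 1} := by
  let Kₘ : Submonoid (Matrix (Fin d) (Fin d) ℝ) :=
    { carrier := K
      mul_mem' := fun hM hN ↦ hK_mul _ hM _ hN
      one_mem' := hSO ⟨by simp, det_one⟩ }
  refine Set.Subset.antisymm (fun M hM ↦ ?_) hSO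
  obtain ⟨O, S, hO, hOdet, hS, hSdet, rfl⟩ :=
    exists_eq_orthogonal_mul_posSemidef_of_det_eq_one (hK_SL M hM)
  have hO_left : Oᵀ * O = 1 := mul_eq_one_comm.mp hO
  have hS_K : S ∈ K := by
    have := hK_mul _ (hSO ⟨by rwa [transpose_transpose], by rwa [det_transpose]⟩) _ hM
    rwa [← mul_assoc, hO_left, one_mul] at this
  have hbdd : BddAbove (Set.range fun k : ℕ ↦ (S ^ k).trace) :=
    (hK_compact.image continuous_id.matrix_trace).bddAbove.mono <| Set.range_subset_iff.2
      fun k ↦ Set.mem_image_of_mem (fun N ↦ N.trace) (Kₘ.pow_mem hS_K k)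
  rw [hS.eq_one_of_bddAbove_trace_pow_of_det_eq_one (by simpa using hbdd) hSdet, mul_one]
  exact ⟨hO, hOdet⟩

theorem so_maximal_compact_in_sl (d : ℕ) (hd : 1 ≤ d)
    (K : Set (Matrix (Fin d) (Fin d) ℝ))
    (hK_SL : ∀ M ∈ K, M.det = 1)
    (hK_one : (1 : Matrix (Fin d) (Fin d) ℝ) ∈ K)
    (hK_mul : ∀ M ∈ K, ∀ N ∈ K, M * N ∈ K)
    (hK_inv : ∀ M ∈ K, M⁻¹ ∈ K)
    (hK_compact : IsCompact K)
    (hSO : {M : Matrix (Fin d) (Fin d) ℝ | M * Mᵀ = 1 ∧ M.det = 1} ⊆ K) :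
    K = {M : Matrix (Fin d) (Fin d) ℝ | M * Mᵀ = 1 ∧ M.det = 1} :=
  so_maximal_compact_in_sl_general d K hK_SL hK_mul hK_compact hSO
end

section
/- Let d ∈ ℕ with d ≥ 1, k ∈ ℕ, γ > 0, and ν > 0. Let f : ℝ^d → [0,∞) be measurable and positively homogeneous of degree k, meaning f(aξ) = a^k f(ξ) for all a > 0 and ξ ∈ ℝ^d, and assume 0 < ∫_{ℝ^d} e^{−γ‖ξ‖²/2} f(ξ) dξ < ∞. Let x be a random vector in ℝ^d whose law has Lebesgue density proportional to e^{−γ‖ξ‖²/2} f(ξ), and let y be a random variable independent of x whose law is the chi distribution with 2ν degrees of freedom (density on (0,∞) proportional to ψ^{2ν−1} e^{−ψ²/2}). Then the random vector z = x/y has Lebesgue density on ℝ^d proportional to f(ζ)(γ^{−1}+‖ζ‖²)^{−α} with α = ν + (d+k)/2, and in particular this last function has finite positive integral over ℝ^d. -/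
/-!
By independence the law of `(X, Y)` has density `p(ξ) q(ψ)`. Substituting `ξ = ψ ζ` (Jacobian
`ψ^d`) in the inner integral and applying Tonelli, `Y⁻¹ • X` has density
`ζ ↦ ∫_{ψ > 0} ψ^d q(ψ) p(ψ ζ) dψ`. Homogeneity of `f` turns this integrand into
`f(ζ) ψ^{2α-1} e^{-(1 + γ‖ζ‖²) ψ²/2}` up to a constant, a Gamma integral equal to
`C f(ζ) (γ⁻¹ + ‖ζ‖²)^{-α}`. Since the law of `Y⁻¹ • X` is a probability measure, `C` must be the
reciprocal of `∫ f(ζ) (γ⁻¹ + ‖ζ‖²)^{-α} dζ`, which is therefore finite and positive.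
-/

open MeasureTheory ProbabilityTheory Set

/-- Density of the chi distribution with `2ν` degrees of freedom,
`ψ ↦ 2^{1−ν} Γ(ν)⁻¹ ψ^{2ν−1} e^{−ψ²/2}` (proportional to `ψ^{2ν−1}e^{−ψ²/2}`). -/
noncomputable def chiTwoNuPDF (ν : ℝ) (ψ : ℝ) : ℝ :=
  (2 : ℝ) ^ (1 - ν) * (Real.Gamma ν)⁻¹ * ψ ^ (2 * ν - 1) * Real.exp (-ψ ^ 2 / 2)

open ENNReal

section Densities

variable {α : Type*} [MeasurableSpace α] {μ : Measure α}

theorem withDensity_ofReal_ne_zero {g : α → ℝ} (hg : Measurable g) {s : Set α} (hs : μ s ≠ 0)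
    (hpos : ∀ x ∈ s, 0 < g x) : μ.withDensity (fun x => ENNReal.ofReal (g x)) ≠ 0 := by
  rw [Ne, withDensity_eq_zero_iff (by fun_prop)]
  intro hzero
  refine hs (measure_mono_null (fun x hx => ?_) (ae_iff.1 hzero))
  simpa using hpos x hx

theorem withDensity_ofReal_indicator {s : Set α} (hs : MeasurableSet s) (g : α → ℝ) :
    μ.withDensity (fun x => ENNReal.ofReal (s.indicator g x)) =
      (μ.restrict s).withDensity fun x => ENNReal.ofReal (g x) := by
  rw [← withDensity_indicator hs]
  congr 1
  ext x
  by_cases hx : x ∈ s <;> simp [hx]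

theorem integrable_and_integral_eq_inv_of_isProbabilityMeasure_withDensity {g : α → ℝ}
    (hg : AEStronglyMeasurable g μ) (hg_nonneg : ∀ x, 0 ≤ g x) {C : ℝ} (hC : 0 < C)
    [IsProbabilityMeasure (μ.withDensity fun x => ENNReal.ofReal (C * g x))] :
    Integrable g μ ∧ ∫ x, g x ∂μ = C⁻¹ := by
  have hmass := measure_univ (μ := μ.withDensity fun x => ENNReal.ofReal (C * g x))
  rw [withDensity_apply _ MeasurableSet.univ, Measure.restrict_univ,
    lintegral_congr fun x => ofReal_mul hC.le, lintegral_const_mul' _ _ ofReal_ne_top] at hmass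
  have hlint : ∫⁻ x, ENNReal.ofReal (g x) ∂μ = ENNReal.ofReal C⁻¹ := by
    rw [ofReal_inv_of_pos hC, ENNReal.eq_inv_of_mul_eq_one_left ((mul_comm _ _).trans hmass)]
  have hint : Integrable g μ :=
    ⟨hg, (hasFiniteIntegral_iff_ofReal (.of_forall hg_nonneg)).2 (hlint ▸ ofReal_lt_top)⟩
  refine ⟨hint, ?_⟩
  rw [integral_eq_lintegral_of_nonneg_ae (.of_forall hg_nonneg) hg, hlint,
    toReal_ofReal (by positivity)]

end Densities

theorem ProbabilityTheory.IndepFun.map_comp_prodMk {Ω α β γ : Type*} [MeasurableSpace Ω]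
    [MeasurableSpace α] [MeasurableSpace β] [MeasurableSpace γ] {P : Measure Ω}
    [IsFiniteMeasure P] {X : Ω → α} {Y : Ω → β} (hXY : IndepFun X Y P) (hX : AEMeasurable X P)
    (hY : AEMeasurable Y P) {F : α × β → γ} (hF : Measurable F) :
    P.map (fun ω => F (X ω, Y ω)) = ((P.map X).prod (P.map Y)).map F := by
  rw [← (indepFun_iff_map_prod_eq_prod_map_map hX hY).1 hXY,
    AEMeasurable.map_map_of_aemeasurable hF.aemeasurable (hX.prodMk hY)]
  rfl

section QuotientDensity

variable {E : Type*} [NormedAddCommGroup E] [NormedSpace ℝ E] [FiniteDimensional ℝ E]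
  [MeasurableSpace E] [BorelSpace E] (μ : Measure E) [μ.IsAddHaarMeasure]

theorem lintegral_eq_ofReal_pow_finrank_mul_lintegral_comp_smul {g : E → ℝ≥0∞}
    (hg : Measurable g) {r : ℝ} (hr : 0 < r) :
    ∫⁻ x, g x ∂μ = ENNReal.ofReal (r ^ Module.finrank ℝ E) * ∫⁻ x, g (r • x) ∂μ := by
  rw [← lintegral_map hg (measurable_const_smul r), Measure.map_addHaar_smul μ hr.ne',
    lintegral_smul_measure, smul_eq_mul, ← mul_assoc, ← ENNReal.ofReal_mul (by positivity),
    abs_of_pos (by positivity), mul_inv_cancel₀ (by positivity), ENNReal.ofReal_one, one_mul]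

theorem map_inv_smul_prod_withDensity {p : E → ℝ≥0∞} {q : ℝ → ℝ≥0∞}
    (hp : Measurable p) (hq : Measurable q) :
    ((μ.withDensity p).prod ((volume.restrict (Ioi 0)).withDensity q)).map
        (fun z => z.2⁻¹ • z.1) =
      μ.withDensity fun ζ =>
        ∫⁻ ψ in Ioi 0, ENNReal.ofReal (ψ ^ Module.finrank ℝ E) * q ψ * p (ψ • ζ) := by
  refine Measure.ext_of_lintegral _ fun φ hφ => ?_
  have scale : ∀ ψ ∈ Ioi (0 : ℝ), ∫⁻ ξ, p ξ * q ψ * φ (ψ⁻¹ • ξ) ∂μ =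
      ∫⁻ ζ, ENNReal.ofReal (ψ ^ Module.finrank ℝ E) * q ψ * p (ψ • ζ) * φ ζ ∂μ := by
    intro ψ hψ
    rw [lintegral_eq_ofReal_pow_finrank_mul_lintegral_comp_smul μ (by fun_prop) hψ,
      ← lintegral_const_mul _ (by fun_prop)]
    refine lintegral_congr fun ζ => ?_
    rw [smul_smul, inv_mul_cancel₀ (ne_of_gt hψ), one_smul]
    ring
  rw [lintegral_map hφ (by fun_prop), prod_withDensity hp hq,
    lintegral_withDensity_eq_lintegral_mul _ (by fun_prop) (by fun_prop),
    lintegral_prod_symm _ (by fun_prop)]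
  simp only [Pi.mul_apply]
  rw [setLIntegral_congr_fun measurableSet_Ioi scale, lintegral_lintegral_swap (by fun_prop),
    lintegral_withDensity_eq_lintegral_mul _ (by fun_prop) hφ]
  refine lintegral_congr fun ζ => ?_
  rw [Pi.mul_apply, ← lintegral_mul_const _ (by fun_prop)]

end QuotientDensity

@[fun_prop]
theorem measurable_chiTwoNuPDF (ν : ℝ) : Measurable (chiTwoNuPDF ν) := by
  unfold chiTwoNuPDF
  fun_prop

theorem chiTwoNuPDF_pos {ν ψ : ℝ} (hν : 0 < ν) (hψ : 0 < ψ) : 0 < chiTwoNuPDF ν ψ := by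
  have := Real.Gamma_pos_of_pos hν
  unfold chiTwoNuPDF
  positivity

theorem lintegral_rpow_mul_exp_neg_mul_sq {q b : ℝ} (hq : -1 < q) (hb : 0 < b) :
    ∫⁻ ψ in Ioi 0, ENNReal.ofReal (ψ ^ q * Real.exp (-b * ψ ^ 2)) =
      ENNReal.ofReal (b ^ (-(q + 1) / 2) * (1 / 2) * Real.Gamma ((q + 1) / 2)) := by
  have hint := integrableOn_rpow_mul_exp_neg_mul_rpow hq two_pos hb
  have hval := integral_rpow_mul_exp_neg_mul_rpow two_pos hq hb
  simp only [Real.rpow_two] at hint hval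
  rw [← ofReal_integral_eq_lintegral_ofReal hint, hval]
  filter_upwards [ae_restrict_mem measurableSet_Ioi] with ψ (hψ : 0 < ψ)
  positivity

theorem exists_lintegral_chi_mul_gaussian_homogeneous {E : Type*} [NormedAddCommGroup E]
    [NormedSpace ℝ E] {f : E → ℝ} {k : ℕ} (hf_nonneg : ∀ ξ, 0 ≤ f ξ)
    (hf_hom : ∀ a : ℝ, 0 < a → ∀ ξ, f (a • ξ) = a ^ k * f ξ) {γ ν I : ℝ}
    (hγ : 0 < γ) (hν : 0 < ν) (hI : 0 < I) (d : ℕ) :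
    ∃ C > 0, ∀ ζ, ∫⁻ ψ in Ioi 0, ENNReal.ofReal (ψ ^ d) * ENNReal.ofReal (chiTwoNuPDF ν ψ) *
        ENNReal.ofReal (Real.exp (-γ * ‖ψ • ζ‖ ^ 2 / 2) * f (ψ • ζ) / I) =
      ENNReal.ofReal (C * (f ζ * (γ⁻¹ + ‖ζ‖ ^ 2) ^ (-(ν + ((d : ℝ) + k) / 2)))) := by
  set α := ν + ((d : ℝ) + k) / 2 with hα_def
  have hα : 0 < α := by positivity
  set c := (2 : ℝ) ^ (1 - ν) * (Real.Gamma ν)⁻¹ with hc_def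
  have hc : 0 < c := mul_pos (by positivity) (inv_pos.2 (Real.Gamma_pos_of_pos hν))
  refine ⟨c / I * ((γ / 2) ^ (-α) * (1 / 2) * Real.Gamma α),
    by have := Real.Gamma_pos_of_pos hα; positivity, fun ζ => ?_⟩
  have hfζ := hf_nonneg ζ
  have integrand : ∀ ψ ∈ Ioi (0 : ℝ),
      ENNReal.ofReal (ψ ^ d) * ENNReal.ofReal (chiTwoNuPDF ν ψ) *
        ENNReal.ofReal (Real.exp (-γ * ‖ψ • ζ‖ ^ 2 / 2) * f (ψ • ζ) / I) =
      ENNReal.ofReal (c * f ζ / I) *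
        ENNReal.ofReal (ψ ^ (2 * α - 1) * Real.exp (-((1 + γ * ‖ζ‖ ^ 2) / 2) * ψ ^ 2)) := by
    intro ψ (hψ : 0 < ψ)
    have hchi := (chiTwoNuPDF_pos hν hψ).le
    have hpow : ψ ^ (2 * α - 1) = ψ ^ (2 * ν - 1) * ψ ^ d * ψ ^ k := by
      rw [← Real.rpow_natCast ψ d, ← Real.rpow_natCast ψ k, ← Real.rpow_add hψ,
        ← Real.rpow_add hψ, hα_def]
      ring_nf
    have hexp : Real.exp (-((1 + γ * ‖ζ‖ ^ 2) / 2) * ψ ^ 2) =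
        Real.exp (-ψ ^ 2 / 2) * Real.exp (-γ * ‖ψ • ζ‖ ^ 2 / 2) := by
      rw [← Real.exp_add, norm_smul, Real.norm_of_nonneg hψ.le]
      ring_nf
    rw [← ofReal_mul (by positivity), ← ofReal_mul (by positivity), ← ofReal_mul (by positivity),
      hf_hom ψ hψ, hpow, hexp, chiTwoNuPDF, hc_def]
    ring_nf
  have hb : (1 + γ * ‖ζ‖ ^ 2) / 2 = γ / 2 * (γ⁻¹ + ‖ζ‖ ^ 2) := by field_simp
  rw [setLIntegral_congr_fun measurableSet_Ioi integrand, lintegral_const_mul _ (by fun_prop),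
    lintegral_rpow_mul_exp_neg_mul_sq (by linarith) (by positivity), ← ofReal_mul (by positivity),
    show (2 * α - 1 + 1) / 2 = α by ring, show -(2 * α - 1 + 1) / 2 = -α by ring, hb,
    Real.mul_rpow (by positivity) (by positivity)]
  ring_nf

theorem chi_quotient_density_general {Ω : Type*} [MeasurableSpace Ω]
    (P : Measure Ω) [IsProbabilityMeasure P]
    (d k : ℕ) (γ ν : ℝ) (hγ : 0 < γ) (hν : 0 < ν)
    (f : EuclideanSpace ℝ (Fin d) → ℝ)
    (hf_meas : Measurable f) (hf_nonneg : ∀ ξ, 0 ≤ f ξ)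
    (hf_hom : ∀ a : ℝ, 0 < a → ∀ ξ, f (a • ξ) = a ^ k * f ξ)
    (hf_int : Integrable (fun ξ : EuclideanSpace ℝ (Fin d) =>
      Real.exp (-γ * ‖ξ‖ ^ 2 / 2) * f ξ))
    (hf_pos : 0 < ∫ ξ : EuclideanSpace ℝ (Fin d),
      Real.exp (-γ * ‖ξ‖ ^ 2 / 2) * f ξ)
    (X : Ω → EuclideanSpace ℝ (Fin d)) (Y : Ω → ℝ)
    (hX : Measure.map X P =
      volume.withDensity fun ξ => ENNReal.ofReal
        (Real.exp (-γ * ‖ξ‖ ^ 2 / 2) * f ξ /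
          ∫ ξ' : EuclideanSpace ℝ (Fin d), Real.exp (-γ * ‖ξ'‖ ^ 2 / 2) * f ξ'))
    (hY : Measure.map Y P =
      volume.withDensity fun ψ =>
        ENNReal.ofReal ((Ioi (0 : ℝ)).indicator (chiTwoNuPDF ν) ψ))
    (hXY : IndepFun X Y P) :
    Integrable (fun ζ : EuclideanSpace ℝ (Fin d) =>
      f ζ * (γ⁻¹ + ‖ζ‖ ^ 2) ^ (-(ν + ((d : ℝ) + (k : ℝ)) / 2))) ∧
    (0 < ∫ ζ : EuclideanSpace ℝ (Fin d),
      f ζ * (γ⁻¹ + ‖ζ‖ ^ 2) ^ (-(ν + ((d : ℝ) + (k : ℝ)) / 2))) ∧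
    Measure.map (fun ω => (Y ω)⁻¹ • X ω) P =
      volume.withDensity fun ζ => ENNReal.ofReal
        (f ζ * (γ⁻¹ + ‖ζ‖ ^ 2) ^ (-(ν + ((d : ℝ) + (k : ℝ)) / 2)) /
          ∫ ζ' : EuclideanSpace ℝ (Fin d),
            f ζ' * (γ⁻¹ + ‖ζ'‖ ^ 2) ^ (-(ν + ((d : ℝ) + (k : ℝ)) / 2))) := by
  have hX_nonneg : ∀ ξ, 0 ≤ Real.exp (-γ * ‖ξ‖ ^ 2 / 2) * f ξ := fun ξ =>
    mul_nonneg (Real.exp_nonneg _) (hf_nonneg ξ)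
  have hXm : AEMeasurable X P := .of_map_ne_zero <| hX ▸ withDensity_ofReal_ne_zero
    (by fun_prop) ((integral_pos_iff_support_of_nonneg hX_nonneg hf_int).1 hf_pos).ne'
    fun ξ hξ => div_pos ((hX_nonneg ξ).lt_of_ne' hξ) hf_pos
  rw [withDensity_ofReal_indicator measurableSet_Ioi] at hY
  have hYm : AEMeasurable Y P := .of_map_ne_zero <| hY ▸ withDensity_ofReal_ne_zero
    (by fun_prop) (by simp : volume.restrict (Ioi (0 : ℝ)) (Ioi 0) ≠ 0)
    fun _ hψ => chiTwoNuPDF_pos hν hψ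
  obtain ⟨C, hC, hdensity⟩ :=
    exists_lintegral_chi_mul_gaussian_homogeneous hf_nonneg hf_hom hγ hν hf_pos d
  set g := fun ζ : EuclideanSpace ℝ (Fin d) =>
    f ζ * (γ⁻¹ + ‖ζ‖ ^ 2) ^ (-(ν + ((d : ℝ) + (k : ℝ)) / 2))
  have hZ : P.map (fun ω => (Y ω)⁻¹ • X ω) =
      volume.withDensity fun ζ => ENNReal.ofReal (C * g ζ) := by
    rw [hXY.map_comp_prodMk hXm hYm (F := fun z => z.2⁻¹ • z.1) (by fun_prop), hX, hY,
      map_inv_smul_prod_withDensity volume (by fun_prop) (by fun_prop)]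
    simp_rw [finrank_euclideanSpace_fin, hdensity]
    rfl
  have : IsProbabilityMeasure (volume.withDensity fun ζ => ENNReal.ofReal (C * g ζ)) :=
    hZ ▸ Measure.isProbabilityMeasure_map (by fun_prop)
  obtain ⟨hint, hintegral⟩ := integrable_and_integral_eq_inv_of_isProbabilityMeasure_withDensity
    (μ := volume) (by fun_prop : Measurable g).aestronglyMeasurable
    (fun ζ => by have := hf_nonneg ζ; positivity) hC
  refine ⟨hint, hintegral ▸ inv_pos.2 hC, hZ.trans ?_⟩
  simp_rw [hintegral, div_inv_eq_mul, mul_comm]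
  rfl

theorem chi_quotient_density {Ω : Type*} [MeasurableSpace Ω]
    (P : Measure Ω) [IsProbabilityMeasure P]
    (d k : ℕ) (hd : 1 ≤ d) (γ ν : ℝ) (hγ : 0 < γ) (hν : 0 < ν)
    (f : EuclideanSpace ℝ (Fin d) → ℝ)
    (hf_meas : Measurable f) (hf_nonneg : ∀ ξ, 0 ≤ f ξ)
    (hf_hom : ∀ a : ℝ, 0 < a → ∀ ξ, f (a • ξ) = a ^ k * f ξ)
    (hf_int : Integrable (fun ξ : EuclideanSpace ℝ (Fin d) =>
      Real.exp (-γ * ‖ξ‖ ^ 2 / 2) * f ξ))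
    (hf_pos : 0 < ∫ ξ : EuclideanSpace ℝ (Fin d),
      Real.exp (-γ * ‖ξ‖ ^ 2 / 2) * f ξ)
    (X : Ω → EuclideanSpace ℝ (Fin d)) (Y : Ω → ℝ)
    (hX : Measure.map X P =
      volume.withDensity fun ξ => ENNReal.ofReal
        (Real.exp (-γ * ‖ξ‖ ^ 2 / 2) * f ξ /
          ∫ ξ' : EuclideanSpace ℝ (Fin d), Real.exp (-γ * ‖ξ'‖ ^ 2 / 2) * f ξ'))
    (hY : Measure.map Y P =
      volume.withDensity fun ψ =>
        ENNReal.ofReal ((Ioi (0 : ℝ)).indicator (chiTwoNuPDF ν) ψ))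
    (hXY : IndepFun X Y P) :
    Integrable (fun ζ : EuclideanSpace ℝ (Fin d) =>
      f ζ * (γ⁻¹ + ‖ζ‖ ^ 2) ^ (-(ν + ((d : ℝ) + (k : ℝ)) / 2))) ∧
    (0 < ∫ ζ : EuclideanSpace ℝ (Fin d),
      f ζ * (γ⁻¹ + ‖ζ‖ ^ 2) ^ (-(ν + ((d : ℝ) + (k : ℝ)) / 2))) ∧
    Measure.map (fun ω => (Y ω)⁻¹ • X ω) P =
      volume.withDensity fun ζ => ENNReal.ofReal
        (f ζ * (γ⁻¹ + ‖ζ‖ ^ 2) ^ (-(ν + ((d : ℝ) + (k : ℝ)) / 2)) /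
          ∫ ζ' : EuclideanSpace ℝ (Fin d),
            f ζ' * (γ⁻¹ + ‖ζ'‖ ^ 2) ^ (-(ν + ((d : ℝ) + (k : ℝ)) / 2))) :=
  chi_quotient_density_general P d k γ ν hγ hν f hf_meas hf_nonneg hf_hom hf_int hf_pos X Y hX hY
    hXY
end

section
/- Let l ∈ ℕ with l ≥ 1, let α₁,…,α_p be finitely many nonzero vectors in ℝ^l, and let ν and n be real numbers with 2ν + n ≥ 2p + l. Then for every ε > 0, the integral ∫_{0 < ‖λ‖ < ε} ‖λ‖^{−2ν−n} ∏_{i=1}^p ⟨λ, α_i⟩² dλ diverges (equals +∞). -/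
/-!
The integrand is homogeneous of degree `2p - 2ν - n ≤ -l`, so the substitution `x ↦ x / 2`
shows that its integral over the punctured ball of radius `ε / 2` is at least its integral over
the punctured ball of radius `ε`. The latter exceeds the former by the integral over the shell
`ε / 2 ≤ ‖x‖ < ε`, which is positive because the integrand vanishes only on finitely many
hyperplanes; hence neither integral can be finite.
-/

open MeasureTheory Set Module
open scoped Pointwise RealInnerProductSpace

namespace MeasureTheory.Measure

theorem measure_shell_ne_zero {V : Type*} [NormedAddCommGroup V] [NormedSpace ℝ V]
    [Nontrivial V] [MeasurableSpace V] (μ : Measure V) [μ.IsOpenPosMeasure] {s r : ℝ}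
    (hs : 0 ≤ s) (hsr : s < r) :
    μ {x : V | s ≤ ‖x‖ ∧ ‖x‖ < r} ≠ 0 := by
  have hopen : IsOpen {x : V | s < ‖x‖ ∧ ‖x‖ < r} :=
    (isOpen_lt continuous_const continuous_norm).inter (isOpen_lt continuous_norm continuous_const)
  obtain ⟨x, hx⟩ := exists_norm_eq V (c := (s + r) / 2) (by linarith)
  have hne : {x : V | s < ‖x‖ ∧ ‖x‖ < r}.Nonempty :=
    ⟨x, show s < ‖x‖ ∧ ‖x‖ < r by constructor <;> linarith⟩
  have hsub : {x : V | s < ‖x‖ ∧ ‖x‖ < r} ⊆ {x : V | s ≤ ‖x‖ ∧ ‖x‖ < r} :=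
    fun y hy => ⟨hy.1.le, hy.2⟩
  exact fun h => hopen.measure_ne_zero μ hne (measure_mono_null hsub h)

theorem setLIntegral_ne_zero_of_ae_ne_zero {α : Type*} [MeasurableSpace α] {μ : Measure α}
    {S : Set α} (hS : MeasurableSet S) (hμS : μ S ≠ 0) {F : α → ENNReal}
    (hF : AEMeasurable F (μ.restrict S)) (hne : ∀ᵐ x ∂μ, x ∈ S → F x ≠ 0) :
    ∫⁻ x in S, F x ∂μ ≠ 0 := by
  rw [Ne, setLIntegral_eq_zero_iff' hS hF]
  refine fun hzero => hμS (measure_eq_zero_iff_ae_notMem.2 ?_)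
  filter_upwards [hzero, hne] with x hx0 hx hxS
  exact hx hxS (hx0 hxS)

variable {E : Type*} [NormedAddCommGroup E] [NormedSpace ℝ E] [MeasurableSpace E] [BorelSpace E]
  [FiniteDimensional ℝ E] (μ : Measure E) [μ.IsAddHaarMeasure]

theorem setLIntegral_comp_smul {t : ℝ} (ht : t ≠ 0) (F : E → ENNReal) (S : Set E) :
    ∫⁻ x in S, F (t • x) ∂μ = ENNReal.ofReal |(t ^ finrank ℝ E)⁻¹| * ∫⁻ x in t • S, F x ∂μ := by
  let g := (Homeomorph.smulOfNeZero t ht : E ≃ₜ E).toMeasurableEquiv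
  have hS : g ⁻¹' (t • S) = S := by
    ext x; simp [g, Set.smul_mem_smul_set_iff₀ ht]
  calc ∫⁻ x in S, F (t • x) ∂μ = ∫⁻ x in t • S, F x ∂(μ.map g) := by
        rw [g.restrict_map, lintegral_map_equiv, hS]; rfl
    _ = _ := by
        rw [show (g : E → E) = (t • ·) from rfl, map_addHaar_smul μ ht, Measure.restrict_smul,
          lintegral_smul_measure, smul_eq_mul]

theorem setLIntegral_le_setLIntegral_smul {t : ℝ} (ht : 0 < t) {F : E → ENNReal}
    (hF : ∀ x, F x ≤ ENNReal.ofReal (t ^ finrank ℝ E) * F (t • x)) (S : Set E) :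
    ∫⁻ x in S, F x ∂μ ≤ ∫⁻ x in t • S, F x ∂μ := by
  have hcancel :
      ENNReal.ofReal (t ^ finrank ℝ E) * ENNReal.ofReal |(t ^ finrank ℝ E)⁻¹| = 1 := by
    rw [← ENNReal.ofReal_mul (by positivity), abs_of_pos (by positivity),
      mul_inv_cancel₀ (by positivity), ENNReal.ofReal_one]
  calc ∫⁻ x in S, F x ∂μ ≤ ∫⁻ x in S, ENNReal.ofReal (t ^ finrank ℝ E) * F (t • x) ∂μ :=
        lintegral_mono fun x => hF x
    _ = ∫⁻ x in t • S, F x ∂μ := by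
        rw [lintegral_const_mul' _ _ ENNReal.ofReal_ne_top, setLIntegral_comp_smul μ ht.ne',
          ← mul_assoc, hcancel, one_mul]

theorem lintegral_punctured_ball_eq_top {t r : ℝ} (ht₀ : 0 < t) (ht₁ : t ≤ 1) {F : E → ENNReal}
    (hF : ∀ x, F x ≤ ENNReal.ofReal (t ^ finrank ℝ E) * F (t • x))
    (hshell : ∫⁻ x in {x : E | t * r ≤ ‖x‖ ∧ ‖x‖ < r}, F x ∂μ ≠ 0) :
    ∫⁻ x in {x : E | 0 < ‖x‖ ∧ ‖x‖ < r}, F x ∂μ = ⊤ := by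
  set B : ℝ → Set E := fun s => {x | 0 < ‖x‖ ∧ ‖x‖ < s}
  set A := {x : E | t * r ≤ ‖x‖ ∧ ‖x‖ < r}
  change ∫⁻ x in B r, F x ∂μ = ⊤
  have hsmul : t • B r = B (t * r) := by
    ext x
    simp only [B, mem_smul_set_iff_inv_smul_mem₀ ht₀.ne', mem_ofPred_eq, norm_smul,
      Real.norm_eq_abs, abs_inv, abs_of_pos ht₀]
    rw [inv_mul_lt_iff₀ ht₀, mul_pos_iff_of_pos_left (inv_pos.2 ht₀)]
  have hsplit : B r = B (t * r) ∪ A := by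
    ext x
    simp only [B, A, mem_union, mem_ofPred_eq]
    constructor
    · rintro ⟨h0, hr⟩
      by_cases h : ‖x‖ < t * r
      · exact Or.inl ⟨h0, h⟩
      · exact Or.inr ⟨not_lt.1 h, hr⟩
    · rintro (⟨h0, h⟩ | ⟨h, hr⟩)
      · exact ⟨h0, by nlinarith⟩
      · exact ⟨by nlinarith [norm_nonneg x], hr⟩
  have hA : MeasurableSet A :=
    (measurableSet_le measurable_const measurable_norm).inter
      (measurableSet_lt measurable_norm measurable_const)
  have hdisj : Disjoint (B (t * r)) A :=
    disjoint_left.2 fun x hx hxA => (lt_irrefl _ (hx.2.trans_le hxA.1))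
  by_contra hfin
  have hinner_fin : ∫⁻ x in B (t * r), F x ∂μ ≠ ⊤ :=
    ne_top_of_le_ne_top hfin (lintegral_mono_set (by rw [hsplit]; exact subset_union_left))
  refine hshell (le_antisymm ?_ bot_le)
  refine ENNReal.le_of_add_le_add_left hinner_fin ?_
  calc ∫⁻ x in B (t * r), F x ∂μ + ∫⁻ x in A, F x ∂μ = ∫⁻ x in B r, F x ∂μ := by
        rw [hsplit, lintegral_union hA hdisj]
    _ ≤ ∫⁻ x in B (t * r), F x ∂μ := hsmul ▸ setLIntegral_le_setLIntegral_smul μ ht₀ hF _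
    _ = _ := (add_zero _).symm

end MeasureTheory.Measure

section InnerProduct

variable {E : Type*} [NormedAddCommGroup E] [InnerProductSpace ℝ E] {ι : Type*}

theorem norm_smul_rpow_mul_prod_inner_sq [Fintype ι] (a : ι → E) (e : ℝ) {t : ℝ} (ht : 0 ≤ t)
    (x : E) :
    ‖t • x‖ ^ e * ∏ i, ⟪t • x, a i⟫ ^ 2
      = t ^ e * t ^ (2 * Fintype.card ι) * (‖x‖ ^ e * ∏ i, ⟪x, a i⟫ ^ 2) := by
  simp only [norm_smul, Real.norm_of_nonneg ht, Real.mul_rpow ht (norm_nonneg x),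
    real_inner_smul_left, mul_pow, Finset.prod_mul_distrib, Finset.prod_const, Finset.card_univ,
    ← pow_mul]
  ring

theorem ofReal_norm_rpow_mul_prod_inner_sq_le_smul [Fintype ι] (a : ι → E) {e : ℝ} {d : ℕ}
    (hd : e + 2 * Fintype.card ι + d ≤ 0) {t : ℝ} (ht₀ : 0 < t) (ht₁ : t ≤ 1) (x : E) :
    ENNReal.ofReal (‖x‖ ^ e * ∏ i, ⟪x, a i⟫ ^ 2)
      ≤ ENNReal.ofReal (t ^ d) * ENNReal.ofReal (‖t • x‖ ^ e * ∏ i, ⟪t • x, a i⟫ ^ 2) := by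
  have hfactor : 1 ≤ t ^ d * (t ^ e * t ^ (2 * Fintype.card ι)) := by
    simp only [← Real.rpow_natCast, ← Real.rpow_add ht₀]
    refine Real.one_le_rpow_of_pos_of_le_one_of_nonpos ht₀ ht₁ ?_
    push_cast
    linarith
  rw [← ENNReal.ofReal_mul (by positivity), norm_smul_rpow_mul_prod_inner_sq a e ht₀.le,
    ← mul_assoc]
  refine ENNReal.ofReal_le_ofReal (le_mul_of_one_le_left ?_ hfactor)
  positivity

theorem norm_rpow_mul_prod_inner_sq_pos [Fintype ι] {a : ι → E} (e : ℝ) {x : E}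
    (hx : x ≠ 0) (h : ∀ i, ⟪x, a i⟫ ≠ 0) : 0 < ‖x‖ ^ e * ∏ i, ⟪x, a i⟫ ^ 2 :=
  mul_pos (Real.rpow_pos_of_pos (norm_pos_iff.2 hx) e)
    (Finset.prod_pos fun i _ => sq_pos_of_ne_zero (h i))

variable [FiniteDimensional ℝ E] [MeasurableSpace E] [BorelSpace E]

theorem MeasureTheory.Measure.ae_forall_inner_ne_zero (μ : Measure E) [μ.IsAddHaarMeasure]
    [Countable ι] {a : ι → E} (ha : ∀ i, a i ≠ 0) : ∀ᵐ x ∂μ, ∀ i, ⟪x, a i⟫ ≠ 0 := by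
  refine ae_all_iff.2 fun i => ?_
  have hnull : μ ((ℝ ∙ a i)ᗮ : Submodule ℝ E) = 0 := by
    refine Measure.addHaar_submodule μ _ fun htop => ha i ?_
    rwa [Submodule.orthogonal_eq_top_iff, Submodule.span_singleton_eq_bot] at htop
  filter_upwards [measure_eq_zero_iff_ae_notMem.1 hnull] with x hx
  simpa [Submodule.mem_orthogonal_singleton_iff_inner_left] using hx

end InnerProduct

theorem matern_concentration_integral_diverges (l : ℕ) (hl : 1 ≤ l)
    (p : ℕ) (a : Fin p → EuclideanSpace ℝ (Fin l)) (ha : ∀ i, a i ≠ 0)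
    (ν n : ℝ) (hνn : 2 * ν + n ≥ 2 * (p : ℝ) + (l : ℝ))
    (ε : ℝ) (hε : 0 < ε) :
    ∫⁻ x in {x : EuclideanSpace ℝ (Fin l) | 0 < ‖x‖ ∧ ‖x‖ < ε},
      ENNReal.ofReal (‖x‖ ^ (-(2 * ν) - n) * ∏ i, (inner ℝ x (a i) : ℝ) ^ 2) = ⊤ := by
  have : Nonempty (Fin l) := ⟨⟨0, hl⟩⟩
  have hdim : finrank ℝ (EuclideanSpace ℝ (Fin l)) = l := finrank_euclideanSpace_fin
  refine Measure.lintegral_punctured_ball_eq_top volume (t := 2⁻¹) (by norm_num) (by norm_num)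
    (fun x => ?_) ?_
  · rw [hdim]
    refine ofReal_norm_rpow_mul_prod_inner_sq_le_smul a ?_ (by norm_num) (by norm_num) x
    simp only [Fintype.card_fin]
    linarith
  · refine Measure.setLIntegral_ne_zero_of_ae_ne_zero (by measurability)
      (Measure.measure_shell_ne_zero volume (by positivity) (by linarith)) (by fun_prop) ?_
    filter_upwards [Measure.ae_forall_inner_ne_zero volume ha] with x hinner hx
    have hx0 : x ≠ 0 := norm_pos_iff.1 ((by positivity : (0 : ℝ) < 2⁻¹ * ε).trans_le hx.1)
    exact (ENNReal.ofReal_pos.2 (norm_rpow_mul_prod_inner_sq_pos _ hx0 hinner)).ne'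
end
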